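/- For μ = (n), a monomial matrix v ∈ N lies in N_{(n)} if and only if there exist r ≥ 1, a composition (i_1, …, i_r) of n, and scalars a_1, …, a_r ∈ F_q* such that v = w_{(n)} · (a_1 w_{(i_1)} ⊕ a_2 w_{(i_2)} ⊕ ⋯ ⊕ a_r w_{(i_r)}), where ⊕ denotes the block-diagonal sum of matrices. -/

import Mathlib

open Matrix MonoidAlgebra

/-- `g` is upper triangular with all diagonal entries `1` (unipotent upper triangular). -/
def IsUU {F : Type} [Field F] {n : ℕ} (g : Matrix (Fin n) (Fin n) F) : Prop :=
  (∀ i j : Fin n, j < i → g i j = 0) ∧ (∀ i : Fin n, g i i = 1)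

instance {F : Type} [Field F] [DecidableEq F] {n : ℕ} (g : Matrix (Fin n) (Fin n) F) :
    Decidable (IsUU g) :=
  @decidable_of_iff _ ((∀ i j : Fin n, j < i → g i j = 0) ∧ (∀ i : Fin n, g i i = 1)) Iff.rfl
    (@instDecidableAnd _ _
      (@Fintype.decidableForallFintype _ _ (fun i => @Fintype.decidableForallFintype _ _
        (fun j => @instDecidableForall _ _ (Fin.decLt j i) (decEq _ _)) _) _) inferInstance)

/-- The set `B_μ = {μ₁, μ₁+μ₂, …, μ₁+⋯+μ_ℓ}` of partial sums of the composition `μ`. -/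
def Bset (μ : List ℕ) : Finset ℕ :=
  (Finset.range μ.length).image fun k => (μ.take (k + 1)).sum

/-- The linear character `ψ_μ` of `U`, as a function on all of `GL n F`:
`ψ_μ(u) = ψ(Σ u_{i,i+1})`, where the sum runs over the superdiagonal positions whose
(1-based) row index `i` satisfies `i ∉ B_μ`. -/
noncomputable def psiMu {F : Type} [Field F] [Fintype F] [DecidableEq F]
    (ψ : AddChar F ℂ) (n : ℕ) (μ : List ℕ) (g : GL (Fin n) F) : ℂ :=
  ψ (∑ p : Fin n × Fin n,
      if (p.1 : ℕ) + 1 = (p.2 : ℕ) ∧ (p.1 : ℕ) + 1 ∉ Bset μ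
      then (g : Matrix (Fin n) (Fin n) F) p.1 p.2 else 0)

/-- The subgroup `U` of unipotent upper triangular matrices, as a finset of `GL n F`. -/
noncomputable def Uset (F : Type) [Field F] [Fintype F] [DecidableEq F] (n : ℕ) :
    Finset (GL (Fin n) F) :=
  Finset.univ.filter fun g => IsUU (g : Matrix (Fin n) (Fin n) F)

/-- The idempotent `e_μ = (1/|U|) Σ_{u ∈ U} ψ_μ(u⁻¹) u` of the group algebra `ℂ[GL n F]`. -/
noncomputable def eMu {F : Type} [Field F] [Fintype F] [DecidableEq F]
    (ψ : AddChar F ℂ) (n : ℕ) (μ : List ℕ) : MonoidAlgebra ℂ (GL (Fin n) F) :=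
  ((Uset F n).card : ℂ)⁻¹ • ∑ u ∈ Uset F n, MonoidAlgebra.single u (psiMu ψ n μ u⁻¹)

/-- A matrix is monomial when it has exactly one nonzero entry in each row and column. -/
def IsMonomialMat {F : Type} [Field F] {n : ℕ} (g : Matrix (Fin n) (Fin n) F) : Prop :=
  (∀ i : Fin n, ∃! j : Fin n, g i j ≠ 0) ∧ (∀ j : Fin n, ∃! i : Fin n, g i j ≠ 0)

/-- The set `N_μ` of monomial matrices `v` such that whenever `u, vuv⁻¹ ∈ U` one has
`ψ_μ(u) = ψ_μ(vuv⁻¹)`. -/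
noncomputable def Nmu {F : Type} [Field F] [Fintype F] [DecidableEq F]
    (ψ : AddChar F ℂ) (n : ℕ) (μ : List ℕ) : Set (GL (Fin n) F) :=
  {v | IsMonomialMat (v : Matrix (Fin n) (Fin n) F) ∧
    ∀ u : GL (Fin n) F, IsUU (u : Matrix (Fin n) (Fin n) F) →
      IsUU ((v * u * v⁻¹ : GL (Fin n) F) : Matrix (Fin n) (Fin n) F) →
      psiMu ψ n μ u = psiMu ψ n μ (v * u * v⁻¹)}

/-- The set `M_μ` of `ℓ×ℓ` matrices of monic polynomials with nonzero constant term whose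
degree row sums and degree column sums are both equal to `μ`. -/
def Mmu (F : Type) [Field F] (μ : List ℕ) :
    Set (Matrix (Fin μ.length) (Fin μ.length) (Polynomial F)) :=
  {a | (∀ i j, (a i j).Monic ∧ Polynomial.eval 0 (a i j) ≠ 0) ∧
       (∀ i, (∑ j, (a i j).natDegree) = μ.get i) ∧
       (∀ j, (∑ i, (a i j).natDegree) = μ.get j)}

/-- The unipotent Hecke algebra `H_μ = e_μ ℂ[G] e_μ` as a subspace of the group algebra. -/
noncomputable def Hsub {F : Type} [Field F] [Fintype F] [DecidableEq F] {n : ℕ}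
    (e : MonoidAlgebra ℂ (GL (Fin n) F)) : Submodule ℂ (MonoidAlgebra ℂ (GL (Fin n) F)) :=
  LinearMap.range ((LinearMap.mulLeft ℂ e).comp (LinearMap.mulRight ℂ e))

/-- The `k×k` antidiagonal permutation matrix `w_{(k)}`, `(w_{(k)})_{ij} = δ_{j, k+1-i}`,
padded to size `n` here by taking `k = n`. -/
def antidiagMat (F : Type) [Field F] (n : ℕ) : Matrix (Fin n) (Fin n) F :=
  Matrix.of fun i j => if (i : ℕ) + (j : ℕ) + 1 = n then 1 else 0

/-- The starting index of the `k`-th diagonal block for block sizes `c`. -/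
def blockOffset {r : ℕ} (c : Fin r → ℕ) (k : Fin r) : ℕ :=
  ∑ j ∈ Finset.univ.filter (· < k), c j

/-- The block diagonal sum `a₁ w_{(c₁)} ⊕ a₂ w_{(c₂)} ⊕ ⋯ ⊕ a_r w_{(c_r)}`, written as an
`n×n` matrix: the `k`-th diagonal block occupies rows and columns
`[blockOffset c k, blockOffset c k + c k)` and is the antidiagonal matrix scaled by `a k`. -/
def blockAnti (F : Type) [Field F] (n : ℕ) {r : ℕ} (c : Fin r → ℕ) (a : Fin r → F) :
    Matrix (Fin n) (Fin n) F :=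
  Matrix.of fun x y => ∑ k : Fin r,
    if blockOffset c k ≤ (x : ℕ) ∧ (x : ℕ) < blockOffset c k + c k ∧
       blockOffset c k ≤ (y : ℕ) ∧ (y : ℕ) < blockOffset c k + c k ∧
       (x : ℕ) + (y : ℕ) + 1 = 2 * blockOffset c k + c k
    then a k else 0


set_option linter.unusedSectionVars false

lemma blockOffset_eq_sum_ite {r : ℕ} (c : Fin r → ℕ) (k : Fin r) :
    blockOffset c k = ∑ j, if j < k then c j else 0 := by
  rw [blockOffset, Finset.sum_filter]

lemma blockOffset_add_self {r : ℕ} (c : Fin r → ℕ) (k : Fin r) :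
    blockOffset c k + c k = ∑ j, if j ≤ k then c j else 0 := by
  rw [blockOffset_eq_sum_ite]
  have h : ∀ j : Fin r, (if j ≤ k then c j else 0)
      = (if j < k then c j else 0) + (if j = k then c j else 0) := by
    intro j
    rcases lt_trichotomy j k with h | h | h
    · simp [h, le_of_lt h, ne_of_lt h]
    · simp [h]
    · simp [not_le_of_gt h, not_lt_of_gt h, (ne_of_gt h)]
  rw [Finset.sum_congr rfl (fun j _ => h j), Finset.sum_add_distrib, Finset.sum_ite_eq']
  simp

lemma blockOffset_zero {r : ℕ} (c : Fin (r+1) → ℕ) : blockOffset c 0 = 0 := by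
  rw [blockOffset_eq_sum_ite]
  simp [Fin.not_lt_zero]

lemma blockOffset_cons_succ {r : ℕ} (c1 : ℕ) (c : Fin r → ℕ) (k : Fin r) :
    blockOffset (Fin.cons c1 c) k.succ = c1 + blockOffset c k := by
  rw [blockOffset_eq_sum_ite, blockOffset_eq_sum_ite, Fin.sum_univ_succ]
  simp only [Fin.cons_zero, Fin.cons_succ, Fin.succ_lt_succ_iff]
  congr 1

lemma blockOffset_le_of_lt {r : ℕ} (c : Fin r → ℕ) {k k' : Fin r} (h : k < k') :
    blockOffset c k + c k ≤ blockOffset c k' := by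
  rw [blockOffset_add_self, blockOffset_eq_sum_ite]
  apply Finset.sum_le_sum
  intro j _
  split_ifs with h1 h2 h2
  · exact le_refl _
  · exact absurd (lt_of_le_of_lt h1 h) h2
  · exact Nat.zero_le _
  · exact le_refl _

lemma blockOffset_add_le {r : ℕ} (c : Fin r → ℕ) (k : Fin r) :
    blockOffset c k + c k ≤ ∑ j, c j := by
  rw [blockOffset_add_self]
  apply Finset.sum_le_sum
  intro j _
  split_ifs <;> simp

lemma block_disjoint {r : ℕ} (c : Fin r → ℕ) {k k' : Fin r} {x : ℕ}
    (h1 : blockOffset c k ≤ x) (h2 : x < blockOffset c k + c k)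
    (h3 : blockOffset c k' ≤ x) (h4 : x < blockOffset c k' + c k') : k = k' := by
  by_contra hne
  rcases lt_or_gt_of_ne hne with h | h
  · exact absurd h3 (not_le_of_gt (lt_of_lt_of_le h2 (blockOffset_le_of_lt c h)))
  · exact absurd h1 (not_le_of_gt (lt_of_lt_of_le h4 (blockOffset_le_of_lt c h)))

lemma block_cover {r : ℕ} (c : Fin r → ℕ) (hr : 1 ≤ r) {x : ℕ} (hx : x < ∑ j, c j) :
    ∃ k : Fin r, blockOffset c k ≤ x ∧ x < blockOffset c k + c k := by
  classical
  have hne : (Finset.univ.filter (fun k : Fin r => blockOffset c k ≤ x)).Nonempty := by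
    refine ⟨⟨0, hr⟩, ?_⟩
    simp only [Finset.mem_filter, Finset.mem_univ, true_and]
    rw [blockOffset_eq_sum_ite]
    have h0 : ∀ j : Fin r, (if j < ⟨0, hr⟩ then c j else 0) = 0 := by
      intro j
      have : ¬ j < (⟨0, hr⟩ : Fin r) := by simp [Fin.lt_def]
      simp [this]
    rw [Finset.sum_congr rfl (fun j _ => h0 j)]
    simp
  set k := (Finset.univ.filter (fun k : Fin r => blockOffset c k ≤ x)).max' hne with hk
  have hkmem : blockOffset c k ≤ x := by
    have := (Finset.univ.filter (fun k : Fin r => blockOffset c k ≤ x)).max'_mem hne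
    rw [← hk] at this
    exact (Finset.mem_filter.mp this).2
  refine ⟨k, hkmem, ?_⟩
  by_contra hcon
  push_neg at hcon
  by_cases htop : (k : ℕ) + 1 < r
  · set k1 : Fin r := ⟨(k : ℕ) + 1, htop⟩ with hk1
    have hle : blockOffset c k1 ≤ x := by
      refine le_trans ?_ hcon
      rw [blockOffset_add_self, blockOffset_eq_sum_ite]
      apply Finset.sum_le_sum
      intro j _
      split_ifs with ha hb hb
      · exact le_refl _
      · exfalso
        exact hb (Fin.le_def.mpr (by have : (j : ℕ) < (k : ℕ) + 1 := ha; omega))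
      · exact Nat.zero_le _
      · exact le_refl _
    have hle2 : k1 ≤ k := Finset.le_max' _ _ (by simp [hle])
    have : (k : ℕ) + 1 ≤ (k : ℕ) := hle2
    omega
  · have hall : ∀ j : Fin r, j ≤ k := by
      intro j
      have := j.isLt
      exact Fin.le_def.mpr (by omega)
    have hsum : blockOffset c k + c k = ∑ j, c j := by
      rw [blockOffset_add_self]
      apply Finset.sum_congr rfl
      intro j _
      simp [hall j]
    omega

lemma auxStruct {F : Type} [Field F] (n : ℕ) : 1 ≤ n → ∀ (f : ℕ → ℕ) (s : ℕ → F),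
    (∀ x, x < n → f x < n) →
    (∀ x, x < n → ∀ y, y < n → f x = f y → x = y) →
    (∀ x, x < n → s x ≠ 0) →
    (∀ x, x + 1 < n → f (x+1) + 1 = f x → s (x+1) = s x) →
    (∀ x y, x < y → y < n → f x = f y + 1 → y = x + 1) →
    ∃ r, 1 ≤ r ∧ ∃ (c : Fin r → ℕ) (a : Fin r → F),
      (∀ k, 0 < c k) ∧ (∑ k, c k) = n ∧ (∀ k, a k ≠ 0) ∧
      (∀ (k : Fin r) (x : ℕ), blockOffset c k ≤ x → x < blockOffset c k + c k →
        f x + x + 1 = 2 * blockOffset c k + c k ∧ s x = a k) := by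
  induction n using Nat.strong_induction_on with
  | _ n IH =>
  intro hn f s hrange hinj hs hscalar hstep2
  -- surjectivity of f on [0, n)
  have hsurj : ∀ m, m < n → ∃ y, y < n ∧ f y = m := by
    intro m hm
    classical
    have himg : (Finset.range n).image f = Finset.range n := by
      apply Finset.eq_of_subset_of_card_le
      · intro z hz
        rw [Finset.mem_image] at hz
        obtain ⟨y, hy, rfl⟩ := hz
        exact Finset.mem_range.mpr (hrange y (Finset.mem_range.mp hy))
      · rw [Finset.card_image_of_injOn]
        intro a ha b hb hab
        exact hinj a (Finset.mem_range.mp ha) b (Finset.mem_range.mp hb) hab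
    have : m ∈ (Finset.range n).image f := by rw [himg]; exact Finset.mem_range.mpr hm
    rw [Finset.mem_image] at this
    obtain ⟨y, hy, hfy⟩ := this
    exact ⟨y, Finset.mem_range.mp hy, hfy⟩
  have hf0n : f 0 < n := hrange 0 (by omega)
  -- first run
  have firstrun : ∀ x, x ≤ f 0 → f x + x = f 0 ∧ s x = s 0 := by
    intro x
    induction x using Nat.strong_induction_on with
    | _ x IHx =>
    intro hx
    match x, hx with
    | 0, _ => exact ⟨rfl, rfl⟩
    | (x' + 1), hx =>
      have hx' : x' ≤ f 0 := by omega
      obtain ⟨hfx', hsx'⟩ := IHx x' (by omega) hx'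
      have hfx'pos : 1 ≤ f x' := by omega
      obtain ⟨y, hy, hfy⟩ := hsurj (f x' - 1) (by omega)
      have hyx : x' < y := by
        by_contra hle
        push_neg at hle
        obtain ⟨hfy', _⟩ := IHx y (by omega) (by omega)
        omega
      have hyeq : y = x' + 1 := hstep2 x' y hyx hy (by omega)
      subst hyeq
      have hstep : f (x' + 1) + 1 = f x' := by omega
      refine ⟨by omega, ?_⟩
      rw [hscalar x' (by omega) hstep, hsx']
  have hc1n : f 0 + 1 ≤ n := hf0n
  have hglobal : ∀ y, f 0 + 1 ≤ y → y < n → f 0 + 1 ≤ f y := by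
    intro y hy1 hy2
    by_contra hcon
    push_neg at hcon
    have hzle : f 0 - f y ≤ f 0 := by omega
    obtain ⟨hfz, _⟩ := firstrun (f 0 - f y) hzle
    have : f 0 - f y = y := hinj _ (by omega) y (by omega) (by omega)
    omega
  by_cases hcase : f 0 + 1 = n
  · -- single block
    refine ⟨1, le_refl 1, fun _ => n, fun _ => s 0, ?_, ?_, ?_, ?_⟩
    · intro k; show 0 < n; omega
    · simp
    · intro k; exact hs 0 (by omega)
    · intro k x h1 h2'
      have hoff : blockOffset (fun _ : Fin 1 => n) k = 0 := by
        have hk0 : k = 0 := Subsingleton.elim _ _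
        rw [hk0]
        exact blockOffset_zero _
      have hxn : x < n := by
        have : x < blockOffset (fun _ : Fin 1 => n) k + n := h2'
        omega
      obtain ⟨hfx, hsx⟩ := firstrun x (by omega)
      constructor
      · show f x + x + 1 = 2 * blockOffset (fun _ : Fin 1 => n) k + n
        omega
      · exact hsx
  · -- recurse on n' = n - (f 0 + 1)
    have hc1lt : f 0 + 1 < n := by omega
    have hfge : ∀ x, x < n - (f 0 + 1) → f 0 + 1 ≤ f (x + (f 0 + 1)) := fun x hx =>
      hglobal _ (by omega) (by omega)
    obtain ⟨r', hr', c', a', hc'pos, hc'sum, ha', hprop'⟩ :=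
      IH (n - (f 0 + 1)) (by omega) (by omega)
        (fun x => f (x + (f 0 + 1)) - (f 0 + 1)) (fun x => s (x + (f 0 + 1)))
        (fun x hx => by
          show f (x + (f 0 + 1)) - (f 0 + 1) < n - (f 0 + 1)
          have h1 := hrange (x + (f 0 + 1)) (by omega)
          have h2 := hfge x hx
          omega)
        (fun x hx y hy hxy => by
          have hxy' : f (x + (f 0 + 1)) - (f 0 + 1) = f (y + (f 0 + 1)) - (f 0 + 1) := hxy
          have h1 := hfge x hx
          have h2 := hfge y hy
          have h3 : f (x + (f 0 + 1)) = f (y + (f 0 + 1)) := by omega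
          have := hinj (x + (f 0 + 1)) (by omega) (y + (f 0 + 1)) (by omega) h3
          omega)
        (fun x hx => hs (x + (f 0 + 1)) (by omega))
        (fun x hx hst => by
          have e1 : x + 1 + (f 0 + 1) = x + (f 0 + 1) + 1 := by omega
          have hst' : f (x + 1 + (f 0 + 1)) - (f 0 + 1) + 1
              = f (x + (f 0 + 1)) - (f 0 + 1) := hst
          rw [e1] at hst'
          show s (x + 1 + (f 0 + 1)) = s (x + (f 0 + 1))
          rw [e1]
          have h1 := hfge x (by omega)
          have h2 : f 0 + 1 ≤ f (x + (f 0 + 1) + 1) := by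
            have := hfge (x + 1) (by omega)
            rwa [e1] at this
          exact hscalar (x + (f 0 + 1)) (by omega) (by omega))
        (fun x y hxy hy hst => by
          have hst' : f (x + (f 0 + 1)) - (f 0 + 1)
              = f (y + (f 0 + 1)) - (f 0 + 1) + 1 := hst
          have h1 := hfge x (by omega)
          have h2 := hfge y (by omega)
          have h3 : f (x + (f 0 + 1)) = f (y + (f 0 + 1)) + 1 := by omega
          have := hstep2 (x + (f 0 + 1)) (y + (f 0 + 1)) (by omega) (by omega) h3
          omega)
    refine ⟨r' + 1, by omega, Fin.cons (f 0 + 1) c', Fin.cons (s 0) a', ?_, ?_, ?_, ?_⟩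
    · intro k
      refine Fin.cases ?_ ?_ k
      · show 0 < f 0 + 1; omega
      · intro k'; show 0 < c' k'; exact hc'pos k'
    · rw [Fin.sum_cons, hc'sum]; omega
    · intro k
      refine Fin.cases ?_ ?_ k
      · show s 0 ≠ 0; exact hs 0 (by omega)
      · intro k'; show a' k' ≠ 0; exact ha' k'
    · intro k
      refine Fin.cases ?_ ?_ k
      · intro x h1 h2'
        rw [blockOffset_zero] at h1 h2' ⊢
        have hxlt : x < f 0 + 1 := by
          have : x < 0 + (f 0 + 1) := h2'
          omega
        obtain ⟨hfx, hsx⟩ := firstrun x (by omega)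
        constructor
        · show f x + x + 1 = 2 * 0 + (f 0 + 1); omega
        · exact hsx
      · intro k' x h1 h2'
        rw [blockOffset_cons_succ] at h1 h2' ⊢
        have h1' : f 0 + 1 + blockOffset c' k' ≤ x := h1
        have h2'' : x < f 0 + 1 + blockOffset c' k' + c' k' := h2'
        have hxc1 : f 0 + 1 ≤ x := by omega
        have hbd : blockOffset c' k' + c' k' ≤ n - (f 0 + 1) := by
          have := blockOffset_add_le c' k'
          omega
        have hp1 : f (x - (f 0 + 1) + (f 0 + 1)) - (f 0 + 1) + (x - (f 0 + 1)) + 1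
            = 2 * blockOffset c' k' + c' k' :=
          (hprop' k' (x - (f 0 + 1)) (by omega) (by omega)).1
        have hp2 : s (x - (f 0 + 1) + (f 0 + 1)) = a' k' :=
          (hprop' k' (x - (f 0 + 1)) (by omega) (by omega)).2
        have harg : x - (f 0 + 1) + (f 0 + 1) = x := by omega
        rw [harg] at hp1 hp2
        have hfxge : f 0 + 1 ≤ f x := by
          have := hfge (x - (f 0 + 1)) (by omega)
          rwa [harg] at this
        simp only [Fin.cons_succ] at h1' h2'' ⊢
        constructor
        · omega
        · exact hp2

section Infra

variable {F : Type} [Field F] [Fintype F] [DecidableEq F] {n : ℕ}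

lemma Bset_single (n : ℕ) : Bset [n] = {n} := by
  simp [Bset]

lemma psiMu_apply (ψ : AddChar F ℂ) (g : GL (Fin n) F) :
    psiMu ψ n [n] g = ψ (∑ p : Fin n,
      if h : (p : ℕ) + 1 < n then (g : Matrix (Fin n) (Fin n) F) p ⟨(p : ℕ) + 1, h⟩ else 0) := by
  unfold psiMu
  congr 1
  rw [Fintype.sum_prod_type]
  apply Finset.sum_congr rfl
  intro i _
  by_cases h : (i : ℕ) + 1 < n
  · rw [Finset.sum_eq_single (⟨(i : ℕ) + 1, h⟩ : Fin n)]
    · have hc : ((i : ℕ) + 1 = (((⟨(i : ℕ) + 1, h⟩ : Fin n)) : ℕ) ∧ (i : ℕ) + 1 ∉ Bset [n]) := by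
        refine ⟨rfl, ?_⟩
        rw [Bset_single, Finset.mem_singleton]
        omega
      rw [if_pos hc, dif_pos h]
    · intro j _ hj
      rw [if_neg]
      rintro ⟨h1, -⟩
      exact hj (Fin.ext h1.symm)
    · intro h'; exact absurd (Finset.mem_univ _) h'
  · rw [dif_neg h]
    apply Finset.sum_eq_zero
    intro j _
    rw [if_neg]
    rintro ⟨h1, -⟩
    exact h (h1 ▸ j.isLt)

/-- elementary unipotent as a unit -/
noncomputable def elemGL (i j : Fin n) (hij : i ≠ j) (x : F) : GL (Fin n) F :=
  ⟨1 + Matrix.single i j x, 1 - Matrix.single i j x,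
    by
      have h2 : Matrix.single i j x * Matrix.single i j x = 0 := by
        apply Matrix.single_mul_single_of_ne
        exact fun h => hij h.symm
      rw [mul_sub, mul_one, add_mul, one_mul, h2, add_zero, add_sub_cancel_right],
    by
      have h2 : Matrix.single i j x * Matrix.single i j x = 0 := by
        apply Matrix.single_mul_single_of_ne
        exact fun h => hij h.symm
      rw [mul_add, mul_one, sub_mul, one_mul, h2, sub_zero, sub_add_cancel]⟩

@[simp] lemma elemGL_coe (i j : Fin n) (hij : i ≠ j) (x : F) :
    ((elemGL i j hij x : GL (Fin n) F) : Matrix (Fin n) (Fin n) F)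
      = 1 + Matrix.single i j x := rfl

lemma isUU_one_add_std {i j : Fin n} (hij : (i : ℕ) < (j : ℕ)) (x : F) :
    IsUU (1 + Matrix.single i j x) := by
  constructor
  · intro p q hpq
    rw [Matrix.add_apply, Matrix.one_apply_ne, Matrix.single_apply_of_ne, add_zero]
    · rintro ⟨rfl, rfl⟩
      have := Fin.lt_iff_val_lt_val.mp hpq
      omega
    · intro h; rw [h] at hpq; exact lt_irrefl _ hpq
  · intro p
    rw [Matrix.add_apply, Matrix.one_apply_eq, Matrix.single_apply_of_ne, add_zero]
    rintro ⟨rfl, rfl⟩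
    exact lt_irrefl _ hij

lemma psiMu_one_add_std (ψ : AddChar F ℂ) {i j : Fin n} (hij : i ≠ j) (x : F)
    (g : GL (Fin n) F)
    (hg : (g : Matrix (Fin n) (Fin n) F) = 1 + Matrix.single i j x) :
    psiMu ψ n [n] g = ψ (if (i : ℕ) + 1 = (j : ℕ) then x else 0) := by
  rw [psiMu_apply, hg]
  congr 1
  have hterm : ∀ p : Fin n, (if h : (p : ℕ) + 1 < n
      then (1 + Matrix.single i j x) p ⟨(p : ℕ) + 1, h⟩ else 0)
      = if (p : ℕ) = (i : ℕ) ∧ (i : ℕ) + 1 = (j : ℕ) then x else 0 := by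
    intro p
    by_cases h : (p : ℕ) + 1 < n
    · rw [dif_pos h, Matrix.add_apply, Matrix.one_apply_ne (by
        intro hc
        have := Fin.val_eq_val p ⟨(p : ℕ) + 1, h⟩ |>.mpr hc
        simp at this), zero_add]
      by_cases hc : p = i ∧ (⟨(p : ℕ) + 1, h⟩ : Fin n) = j
      · obtain ⟨rfl, hc2⟩ := hc
        subst hc2
        rw [Matrix.single_apply_same, if_pos ⟨rfl, rfl⟩]
      · rw [Matrix.single_apply_of_ne _ _ _ _ _
            (fun hx => hc ⟨hx.1.symm, hx.2.symm⟩), if_neg]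
        rintro ⟨h1, h2⟩
        exact hc ⟨Fin.ext h1, Fin.ext (show ((p : ℕ) + 1 : ℕ) = (j : ℕ) by omega)⟩
    · rw [dif_neg h, if_neg]
      rintro ⟨h1, h2⟩
      have := j.isLt
      omega
  rw [Finset.sum_congr rfl (fun p _ => hterm p)]
  by_cases hcase : (i : ℕ) + 1 = (j : ℕ)
  · rw [if_pos hcase, Finset.sum_eq_single i]
    · rw [if_pos ⟨rfl, hcase⟩]
    · intro b _ hb
      rw [if_neg]
      rintro ⟨h1, -⟩
      exact hb (Fin.ext h1)
    · intro h; exact absurd (Finset.mem_univ _) h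
  · rw [if_neg hcase]
    apply Finset.sum_eq_zero
    intro p _
    rw [if_neg]
    rintro ⟨-, h2⟩
    exact hcase h2

lemma addChar_eq_one_of_smul (ψ : AddChar F ℂ) (c : F) (hc : c ≠ 0)
    (h : ∀ x : F, ψ (c * x) = 1) : ψ = 1 := by
  by_contra hne
  obtain ⟨y, hy⟩ := AddChar.ne_one_iff.mp hne
  apply hy
  have := h (c⁻¹ * y)
  rwa [← mul_assoc, mul_inv_cancel₀ hc, one_mul] at this

set_option linter.unusedSectionVars false

lemma monomial_data {V : Matrix (Fin n) (Fin n) F} (hm : IsMonomialMat V) :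
    ∃ (e : Equiv.Perm (Fin n)) (t : Fin n → F), (∀ i, t i ≠ 0) ∧
      (∀ i j, V i j = if j = e i then t i else 0) := by
  classical
  have hex : ∀ i : Fin n, ∃ j, V i j ≠ 0 := fun i => (hm.1 i).exists
  set sig : Fin n → Fin n := fun i => (hex i).choose with hsig
  have hspec : ∀ i, V i (sig i) ≠ 0 := fun i => (hex i).choose_spec
  have huniq : ∀ i j, V i j ≠ 0 → j = sig i := by
    intro i j hj
    obtain ⟨j0, hj0, hu⟩ := hm.1 i
    rw [hu j hj, hu (sig i) (hspec i)]
  have hinj : Function.Injective sig := by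
    intro i i' h
    obtain ⟨i0, hi0, hu⟩ := hm.2 (sig i)
    have e1 : i = i0 := hu i (hspec i)
    have e2 : i' = i0 := hu i' (by rw [h]; exact hspec i')
    rw [e1, e2]
  refine ⟨Equiv.ofBijective sig (Finite.injective_iff_bijective.mp hinj), fun i => V i (sig i),
    hspec, ?_⟩
  intro i j
  simp only [Equiv.ofBijective_apply]
  by_cases h : j = sig i
  · rw [if_pos h, h]
  · rw [if_neg h]
    by_contra hne
    exact h (huniq i j hne)

/-- inverse of a monomial matrix -/
lemma monomial_inv (v : GL (Fin n) F) (e : Equiv.Perm (Fin n)) (t : Fin n → F)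
    (ht : ∀ i, t i ≠ 0)
    (hV : ∀ i j, (v : Matrix (Fin n) (Fin n) F) i j = if j = e i then t i else 0) :
    ((v⁻¹ : GL (Fin n) F) : Matrix (Fin n) (Fin n) F)
      = Matrix.of (fun p q => if p = e q then (t q)⁻¹ else 0) := by
  set W : Matrix (Fin n) (Fin n) F := Matrix.of (fun p q => if p = e q then (t q)⁻¹ else 0)
    with hW
  have hVW : (v : Matrix (Fin n) (Fin n) F) * W = 1 := by
    ext i i'
    rw [Matrix.mul_apply, Finset.sum_eq_single (e i)]
    · rw [hV, if_pos rfl, hW, Matrix.of_apply]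
      by_cases h : i = i'
      · subst h
        rw [if_pos rfl, Matrix.one_apply_eq, mul_inv_cancel₀ (ht i)]
      · rw [if_neg (fun hc => h (e.injective hc.symm).symm), Matrix.one_apply_ne h, mul_zero]
    · intro b _ hb
      rw [hV, if_neg hb, zero_mul]
    · intro h; exact absurd (Finset.mem_univ _) h
  calc ((v⁻¹ : GL (Fin n) F) : Matrix (Fin n) (Fin n) F)
      = ((v⁻¹ : GL (Fin n) F) : Matrix (Fin n) (Fin n) F) * ((v : Matrix (Fin n) (Fin n) F) * W) := by
        rw [hVW, mul_one]
    _ = (((v⁻¹ * v : GL (Fin n) F)) : Matrix (Fin n) (Fin n) F) * W := by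
        rw [Units.val_mul, mul_assoc]
    _ = W := by rw [inv_mul_cancel]; simp

lemma conj_entry (v u : GL (Fin n) F) (e : Equiv.Perm (Fin n)) (t : Fin n → F)
    (ht : ∀ i, t i ≠ 0)
    (hV : ∀ i j, (v : Matrix (Fin n) (Fin n) F) i j = if j = e i then t i else 0)
    (p q : Fin n) :
    ((v * u * v⁻¹ : GL (Fin n) F) : Matrix (Fin n) (Fin n) F) p q
      = t p * (u : Matrix (Fin n) (Fin n) F) (e p) (e q) * (t q)⁻¹ := by
  have hcoe : ((v * u * v⁻¹ : GL (Fin n) F) : Matrix (Fin n) (Fin n) F)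
      = (v : Matrix (Fin n) (Fin n) F) * (u : Matrix (Fin n) (Fin n) F)
        * ((v⁻¹ : GL (Fin n) F) : Matrix (Fin n) (Fin n) F) := by
    rw [Units.val_mul, Units.val_mul]
  rw [hcoe, monomial_inv v e t ht hV]
  rw [Matrix.mul_apply, Finset.sum_eq_single (e q)]
  · rw [Matrix.of_apply, if_pos rfl, Matrix.mul_apply, Finset.sum_eq_single (e p)]
    · rw [hV, if_pos rfl]
    · intro b _ hb
      rw [hV, if_neg hb, zero_mul]
    · intro h; exact absurd (Finset.mem_univ _) h
  · intro b _ hb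
    rw [Matrix.of_apply, if_neg hb, mul_zero]
  · intro h; exact absurd (Finset.mem_univ _) h

lemma memNmu_of (ψ : AddChar F ℂ) (v : GL (Fin n) F) (e : Equiv.Perm (Fin n))
    (t : Fin n → F) (ht : ∀ i, t i ≠ 0)
    (hV : ∀ i j, (v : Matrix (Fin n) (Fin n) F) i j = if j = e i then t i else 0)
    (hS2 : ∀ (p : Fin n) (hp : (p : ℕ) + 1 < n),
      ((e ⟨(p : ℕ) + 1, hp⟩ : Fin n) : ℕ) = (e p : ℕ) + 1 ∧ t ⟨(p : ℕ) + 1, hp⟩ = t p ∨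
      ((e ⟨(p : ℕ) + 1, hp⟩ : Fin n) : ℕ) < (e p : ℕ))
    (hS3 : ∀ p q : Fin n, ((e q : Fin n) : ℕ) = ((e p : Fin n) : ℕ) + 1 →
      (q : ℕ) = (p : ℕ) + 1 ∨ (q : ℕ) < (p : ℕ)) :
    v ∈ Nmu ψ n [n] := by
  constructor
  · constructor
    · intro i
      refine ⟨e i, ?_, ?_⟩
      · show (v : Matrix (Fin n) (Fin n) F) i (e i) ≠ 0
        rw [hV, if_pos rfl]; exact ht i
      · intro y hy
        have hy' : (v : Matrix (Fin n) (Fin n) F) i y ≠ 0 := hy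
        by_contra hne
        rw [hV, if_neg hne] at hy'
        exact hy' rfl
    · intro j
      refine ⟨e.symm j, ?_, ?_⟩
      · show (v : Matrix (Fin n) (Fin n) F) (e.symm j) j ≠ 0
        rw [hV, if_pos (by simp)]; exact ht _
      · intro y hy
        have hy' : (v : Matrix (Fin n) (Fin n) F) y j ≠ 0 := hy
        by_contra hne
        rw [hV, if_neg (fun hc => hne (by rw [hc]; simp))] at hy'
        exact hy' rfl
  · intro u hu hcu
    set U : Matrix (Fin n) (Fin n) F := (u : Matrix (Fin n) (Fin n) F) with hU
    have hC : ∀ p q, ((v * u * v⁻¹ : GL (Fin n) F) : Matrix (Fin n) (Fin n) F) p q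
        = t p * U (e p) (e q) * (t q)⁻¹ := fun p q => conj_entry v u e t ht hV p q
    have hcb : ∀ p q : Fin n, (q : ℕ) < (p : ℕ) → U (e p) (e q) = 0 := by
      intro p q hq
      have h0 := hcu.1 p q (Fin.lt_def.mpr hq)
      rw [hC] at h0
      rcases mul_eq_zero.mp h0 with h | h
      · rcases mul_eq_zero.mp h with h' | h'
        · exact absurd h' (ht p)
        · exact h'
      · exact absurd h (inv_ne_zero (ht q))
    rw [psiMu_apply, psiMu_apply]
    congr 1
    have hre : (∑ p : Fin n, if h : (p : ℕ) + 1 < n then U p ⟨(p : ℕ) + 1, h⟩ else 0)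
        = ∑ p : Fin n, if h : ((e p : Fin n) : ℕ) + 1 < n
            then U (e p) ⟨((e p : Fin n) : ℕ) + 1, h⟩ else 0 :=
      (Equiv.sum_comp e (fun q : Fin n =>
        if h : (q : ℕ) + 1 < n then U q ⟨(q : ℕ) + 1, h⟩ else 0)).symm
    rw [hre]
    apply Finset.sum_congr rfl
    intro p _
    by_cases hp : (p : ℕ) + 1 < n
    · rw [dif_pos hp, hC]
      rcases hS2 p hp with ⟨h1, h2⟩ | hlt
      · have hep : ((e p : Fin n) : ℕ) + 1 < n := by
          have := (e ⟨(p : ℕ) + 1, hp⟩).isLt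
          omega
        rw [dif_pos hep]
        have hfin : (⟨((e p : Fin n) : ℕ) + 1, hep⟩ : Fin n) = e ⟨(p : ℕ) + 1, hp⟩ :=
          Fin.ext (show ((e p : Fin n) : ℕ) + 1 = ((e ⟨(p : ℕ) + 1, hp⟩ : Fin n) : ℕ) by omega)
        rw [hfin, h2, mul_comm (t p) _, mul_assoc, mul_inv_cancel₀ (ht p), mul_one]
      · have hU0 : U (e p) (e ⟨(p : ℕ) + 1, hp⟩) = 0 :=
          hu.1 (e p) (e ⟨(p : ℕ) + 1, hp⟩) (Fin.lt_def.mpr hlt)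
        rw [hU0, mul_zero, zero_mul]
        by_cases hep : ((e p : Fin n) : ℕ) + 1 < n
        · rw [dif_pos hep]
          have heq' : ((e (e.symm ⟨((e p : Fin n) : ℕ) + 1, hep⟩) : Fin n) : ℕ)
              = ((e p : Fin n) : ℕ) + 1 := by simp
          rcases hS3 p (e.symm ⟨((e p : Fin n) : ℕ) + 1, hep⟩) heq' with h | h
          · exfalso
            have hq' : e.symm ⟨((e p : Fin n) : ℕ) + 1, hep⟩ = ⟨(p : ℕ) + 1, hp⟩ :=
              Fin.ext (show ((e.symm ⟨((e p : Fin n) : ℕ) + 1, hep⟩ : Fin n) : ℕ)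
                = (p : ℕ) + 1 by omega)
            rw [hq'] at heq'
            omega
          · have h0 : U (e p) (e (e.symm ⟨((e p : Fin n) : ℕ) + 1, hep⟩)) = 0 := hcb _ _ h
            rw [Equiv.apply_symm_apply] at h0
            exact h0
        · rw [dif_neg hep]
    · rw [dif_neg hp]
      by_cases hep : ((e p : Fin n) : ℕ) + 1 < n
      · rw [dif_pos hep]
        have heq' : ((e (e.symm ⟨((e p : Fin n) : ℕ) + 1, hep⟩) : Fin n) : ℕ)
            = ((e p : Fin n) : ℕ) + 1 := by simp
        rcases hS3 p (e.symm ⟨((e p : Fin n) : ℕ) + 1, hep⟩) heq' with h | h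
        · exfalso
          have := (e.symm ⟨((e p : Fin n) : ℕ) + 1, hep⟩).isLt
          have := p.isLt
          omega
        · have h0 : U (e p) (e (e.symm ⟨((e p : Fin n) : ℕ) + 1, hep⟩)) = 0 := hcb _ _ h
          rw [Equiv.apply_symm_apply] at h0
          exact h0
      · rw [dif_neg hep]

lemma psi_ne_zero (ψ : AddChar F ℂ) (x : F) : ψ x ≠ 0 := by
  intro h0
  have h1 : ψ x * ψ (-x) = 1 := by
    rw [← AddChar.map_add_eq_mul]
    simp
  rw [h0, zero_mul] at h1
  exact zero_ne_one h1

lemma E2_of_mem (ψ : AddChar F ℂ) (hψ : ψ ≠ 1) (v : GL (Fin n) F)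
    (e : Equiv.Perm (Fin n)) (t : Fin n → F) (ht : ∀ i, t i ≠ 0)
    (hV : ∀ i j, (v : Matrix (Fin n) (Fin n) F) i j = if j = e i then t i else 0)
    (hchar : ∀ u : GL (Fin n) F, IsUU (u : Matrix (Fin n) (Fin n) F) →
      IsUU ((v * u * v⁻¹ : GL (Fin n) F) : Matrix (Fin n) (Fin n) F) →
      psiMu ψ n [n] u = psiMu ψ n [n] (v * u * v⁻¹))
    (p q : Fin n) (hpq : (p : ℕ) < (q : ℕ))
    (heq : ((e q : Fin n) : ℕ) = ((e p : Fin n) : ℕ) + 1) :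
    (q : ℕ) = (p : ℕ) + 1 ∧ t q = t p := by
  have hepq : e p ≠ e q := fun h => by rw [h] at heq; omega
  have hpqne : p ≠ q := fun h => by rw [h] at hpq; exact lt_irrefl _ hpq
  have key : ∀ x : F, ψ x = ψ (if (p : ℕ) + 1 = (q : ℕ) then t p * x * (t q)⁻¹ else 0) := by
    intro x
    set u := elemGL (e p) (e q) hepq x with hu
    have hucoe : (u : Matrix (Fin n) (Fin n) F)
        = 1 + Matrix.single (e p) (e q) x := rfl
    have huUU : IsUU (u : Matrix (Fin n) (Fin n) F) := by
      rw [hucoe]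
      exact isUU_one_add_std (by omega) x
    have hconj : ((v * u * v⁻¹ : GL (Fin n) F) : Matrix (Fin n) (Fin n) F)
        = 1 + Matrix.single p q (t p * x * (t q)⁻¹) := by
      ext α β
      rw [conj_entry v u e t ht hV α β, hucoe, Matrix.add_apply, Matrix.add_apply]
      by_cases hab : α = β
      · subst hab
        rw [Matrix.one_apply_eq, Matrix.one_apply_eq,
          Matrix.single_apply_of_ne _ _ _ _ _
            (fun hc => hpqne (e.injective (hc.1.trans hc.2.symm))),
          Matrix.single_apply_of_ne _ _ _ _ _
            (fun hc => hpqne (hc.1.trans hc.2.symm))]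
        field_simp [ht α]
      · rw [Matrix.one_apply_ne hab, Matrix.one_apply_ne (fun hc => hab (e.injective hc)),
          zero_add, zero_add]
        by_cases hc : α = p ∧ β = q
        · obtain ⟨rfl, rfl⟩ := hc
          rw [Matrix.single_apply_same, Matrix.single_apply_same]
        · rw [Matrix.single_apply_of_ne _ _ _ _ _
              (fun hx => hc ⟨e.injective hx.1.symm, e.injective hx.2.symm⟩),
            Matrix.single_apply_of_ne _ _ _ _ _
              (fun hx => hc ⟨hx.1.symm, hx.2.symm⟩), mul_zero, zero_mul]
    have hcUU : IsUU ((v * u * v⁻¹ : GL (Fin n) F) : Matrix (Fin n) (Fin n) F) := by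
      rw [hconj]
      exact isUU_one_add_std hpq _
    have hh := hchar u huUU hcUU
    rw [psiMu_one_add_std ψ hepq x u hucoe,
      psiMu_one_add_std ψ hpqne (t p * x * (t q)⁻¹) _ hconj, if_pos (by omega)] at hh
    exact hh
  by_cases hq : (p : ℕ) + 1 = (q : ℕ)
  · refine ⟨hq.symm, ?_⟩
    have key' : ∀ x : F, ψ x = ψ (t p * (t q)⁻¹ * x) := by
      intro x
      rw [key x, if_pos hq]
      ring_nf
    by_cases hc1 : t p * (t q)⁻¹ = 1
    · have h' : t p = t q := (mul_inv_eq_one₀ (ht q)).mp hc1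
      exact h'.symm
    · exfalso
      apply hψ
      apply addChar_eq_one_of_smul ψ (t p * (t q)⁻¹ - 1) (sub_ne_zero.mpr hc1)
      intro x
      have h1 : ψ ((t p * (t q)⁻¹ - 1) * x + x) = ψ ((t p * (t q)⁻¹ - 1) * x) * ψ x :=
        AddChar.map_add_eq_mul ψ _ _
      have h2 : (t p * (t q)⁻¹ - 1) * x + x = t p * (t q)⁻¹ * x := by ring
      rw [h2, ← key' x] at h1
      exact mul_right_cancel₀ (psi_ne_zero ψ x) (h1.symm.trans (one_mul (ψ x)).symm)
  · exfalso
    apply hψ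
    refine DFunLike.ext ψ 1 (fun y => ?_)
    rw [key y, if_neg hq, AddChar.map_zero_eq_one]
    rfl

lemma mul_blockAnti_entry {r : ℕ} (c : Fin r → ℕ) (a : Fin r → F)
    (hsum : ∑ k, c k = n) (p y : Fin n) (k : Fin r)
    (hk1 : blockOffset c k ≤ n - 1 - (p : ℕ))
    (hk2 : n - 1 - (p : ℕ) < blockOffset c k + c k) :
    (antidiagMat F n * blockAnti F n c a) p y
      = if (n - 1 - (p : ℕ)) + (y : ℕ) + 1 = 2 * blockOffset c k + c k then a k else 0 := by
  have hp := p.isLt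
  have hy := y.isLt
  set x0 : Fin n := ⟨n - 1 - (p : ℕ), by omega⟩ with hx0
  rw [Matrix.mul_apply, Finset.sum_eq_single x0]
  · have h1 : antidiagMat F n p x0 = 1 := by
      rw [antidiagMat, Matrix.of_apply, if_pos]
      show (p : ℕ) + (n - 1 - (p : ℕ)) + 1 = n
      omega
    rw [h1, one_mul, blockAnti, Matrix.of_apply, Finset.sum_eq_single k]
    · have hcond : (blockOffset c k ≤ ((x0 : Fin n) : ℕ) ∧ ((x0 : Fin n) : ℕ) < blockOffset c k + c k ∧
          blockOffset c k ≤ (y : ℕ) ∧ (y : ℕ) < blockOffset c k + c k ∧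
          ((x0 : Fin n) : ℕ) + (y : ℕ) + 1 = 2 * blockOffset c k + c k)
          ↔ ((n - 1 - (p : ℕ)) + (y : ℕ) + 1 = 2 * blockOffset c k + c k) := by
        constructor
        · rintro ⟨-, -, -, -, h5⟩
          exact h5
        · intro h5
          refine ⟨hk1, hk2, by omega, by omega, h5⟩
      rw [if_congr hcond rfl rfl]
    · intro k' _ hk'
      rw [if_neg]
      rintro ⟨a1, a2, -, -, -⟩
      exact hk' (block_disjoint c a1 a2 hk1 hk2)
    · intro h; exact absurd (Finset.mem_univ _) h
  · intro b _ hb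
    have h0 : antidiagMat F n p b = 0 := by
      rw [antidiagMat, Matrix.of_apply, if_neg]
      intro hc
      exact hb (Fin.ext (show (b : ℕ) = n - 1 - (p : ℕ) by omega))
    rw [h0, zero_mul]
  · intro h; exact absurd (Finset.mem_univ _) h

end Infra

/-- For `μ = (n)`, a monomial matrix `v` lies in `N_{(n)}` iff
`v = w_{(n)} · (a₁ w_{(i₁)} ⊕ ⋯ ⊕ a_r w_{(i_r)})` for some composition `(i₁,…,i_r)` of `n`
and nonzero scalars `a₁,…,a_r`. -/
theorem mem_Nn_iff {F : Type} [Field F] [Fintype F] [DecidableEq F]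
    (n : ℕ) (hn : 1 ≤ n) (ψ : AddChar F ℂ) (hψ : ψ ≠ 1) (v : GL (Fin n) F) :
    v ∈ Nmu ψ n [n] ↔
      ∃ (r : ℕ), 1 ≤ r ∧ ∃ (c : Fin r → ℕ) (a : Fin r → F),
        (∀ k, 0 < c k) ∧ (∑ k, c k) = n ∧ (∀ k, a k ≠ 0) ∧
        (v : Matrix (Fin n) (Fin n) F) = antidiagMat F n * blockAnti F n c a := by
  constructor
  · rintro ⟨hmono, hchar⟩
    obtain ⟨e, t, ht, hV⟩ := monomial_data hmono
    have E2 := fun p q hpq heq => E2_of_mem ψ hψ v e t ht hV hchar p q hpq heq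
    have h1 : ∀ x, x < n →
        (if h : x < n then ((e ⟨n - 1 - x, by omega⟩ : Fin n) : ℕ) else 0) < n := by
      intro x hx
      rw [dif_pos hx]
      exact (e _).isLt
    have h2 : ∀ x, x < n → ∀ y, y < n →
        (if h : x < n then ((e ⟨n - 1 - x, by omega⟩ : Fin n) : ℕ) else 0)
          = (if h : y < n then ((e ⟨n - 1 - y, by omega⟩ : Fin n) : ℕ) else 0) → x = y := by
      intro x hx y hy hxy
      rw [dif_pos hx, dif_pos hy] at hxy
      have h' : (⟨n - 1 - x, by omega⟩ : Fin n) = ⟨n - 1 - y, by omega⟩ :=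
        e.injective (Fin.ext hxy)
      have h'' : (n - 1 - x : ℕ) = n - 1 - y := congrArg Fin.val h' 
      omega
    have h3 : ∀ x, x < n →
        (if h : x < n then t ⟨n - 1 - x, by omega⟩ else 1) ≠ 0 := by
      intro x hx
      rw [dif_pos hx]
      exact ht _
    have h4 : ∀ x, x + 1 < n →
        (if h : x + 1 < n then ((e ⟨n - 1 - (x+1), by omega⟩ : Fin n) : ℕ) else 0) + 1
          = (if h : x < n then ((e ⟨n - 1 - x, by omega⟩ : Fin n) : ℕ) else 0) →
        (if h : x + 1 < n then t ⟨n - 1 - (x+1), by omega⟩ else 1)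
          = (if h : x < n then t ⟨n - 1 - x, by omega⟩ else 1) := by
      intro x hx hst
      rw [dif_pos hx, dif_pos (show x < n by omega)] at hst
      rw [dif_pos hx, dif_pos (show x < n by omega)]
      have hE := E2 ⟨n - 1 - (x+1), by omega⟩ ⟨n - 1 - x, by omega⟩
        (show n - 1 - (x+1) < n - 1 - x by omega)
        (show ((e ⟨n - 1 - x, by omega⟩ : Fin n) : ℕ)
          = ((e ⟨n - 1 - (x+1), by omega⟩ : Fin n) : ℕ) + 1 by omega)
      exact hE.2.symm
    have h5 : ∀ x y, x < y → y < n →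
        (if h : x < n then ((e ⟨n - 1 - x, by omega⟩ : Fin n) : ℕ) else 0)
          = (if h : y < n then ((e ⟨n - 1 - y, by omega⟩ : Fin n) : ℕ) else 0) + 1 →
        y = x + 1 := by
      intro x y hxy hy hst
      rw [dif_pos (show x < n by omega), dif_pos hy] at hst
      have hE := E2 ⟨n - 1 - y, by omega⟩ ⟨n - 1 - x, by omega⟩
        (show n - 1 - y < n - 1 - x by omega)
        (show ((e ⟨n - 1 - x, by omega⟩ : Fin n) : ℕ)
          = ((e ⟨n - 1 - y, by omega⟩ : Fin n) : ℕ) + 1 by omega)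
      have h' : (n - 1 - x : ℕ) = (n - 1 - y) + 1 := hE.1
      omega
    obtain ⟨r, hr, c, a, hcpos, hcsum, ha, hprop⟩ :=
      auxStruct n hn
        (fun x => if h : x < n then ((e ⟨n - 1 - x, by omega⟩ : Fin n) : ℕ) else 0)
        (fun x => if h : x < n then t ⟨n - 1 - x, by omega⟩ else 1)
        h1 h2 h3 h4 h5
    refine ⟨r, hr, c, a, hcpos, hcsum, ha, ?_⟩
    ext p yy
    have hp := p.isLt
    have hyy := yy.isLt
    have hxlt : n - 1 - (p : ℕ) < n := by omega
    obtain ⟨k, hk1, hk2⟩ := block_cover c hr (x := n - 1 - (p : ℕ)) (by rw [hcsum]; omega)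
    rw [mul_blockAnti_entry c a hcsum p yy k hk1 hk2]
    have hp1 : (if h : n - 1 - (p : ℕ) < n
        then ((e ⟨n - 1 - (n - 1 - (p : ℕ)), by omega⟩ : Fin n) : ℕ) else 0)
        + (n - 1 - (p : ℕ)) + 1 = 2 * blockOffset c k + c k :=
      (hprop k (n - 1 - (p : ℕ)) hk1 hk2).1
    have hp2 : (if h : n - 1 - (p : ℕ) < n
        then t ⟨n - 1 - (n - 1 - (p : ℕ)), by omega⟩ else 1) = a k :=
      (hprop k (n - 1 - (p : ℕ)) hk1 hk2).2
    rw [dif_pos hxlt] at hp1 hp2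
    have hpe : (⟨n - 1 - (n - 1 - (p : ℕ)), by omega⟩ : Fin n) = p :=
      Fin.ext (show (n - 1 - (n - 1 - (p : ℕ)) : ℕ) = (p : ℕ) by omega)
    rw [hpe] at hp1 hp2
    rw [hV p yy]
    by_cases hy : yy = e p
    · rw [if_pos hy, if_pos (by rw [hy]; omega), hp2]
    · rw [if_neg hy, if_neg]
      intro hc
      exact hy (Fin.ext (show (yy : ℕ) = ((e p : Fin n) : ℕ) by omega))
  · rintro ⟨r, hr, c, a, hcpos, hcsum, ha, hVform⟩
    classical
    have hcov : ∀ p : Fin n, ∃ k : Fin r,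
        blockOffset c k ≤ n - 1 - (p : ℕ) ∧ n - 1 - (p : ℕ) < blockOffset c k + c k := by
      intro p
      have := p.isLt
      exact block_cover c hr (by rw [hcsum]; omega)
    choose K hK1 hK2 using hcov
    have hbnd : ∀ p : Fin n, blockOffset c (K p) + c (K p) ≤ n := by
      intro p
      have := blockOffset_add_le c (K p)
      omega
    set sig : Fin n → Fin n := fun p =>
      ⟨2 * blockOffset c (K p) + c (K p) - 1 - (n - 1 - (p : ℕ)), by
        have := hK1 p; have := hK2 p; have := hbnd p; omega⟩ with hsig
    have hsigval : ∀ p : Fin n,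
        (sig p : ℕ) = 2 * blockOffset c (K p) + c (K p) - 1 - (n - 1 - (p : ℕ)) := fun p => rfl
    have hsiglo : ∀ p : Fin n, blockOffset c (K p) ≤ (sig p : ℕ) := by
      intro p
      have := hK1 p; have := hK2 p
      rw [hsigval]
      omega
    have hsighi : ∀ p : Fin n, (sig p : ℕ) < blockOffset c (K p) + c (K p) := by
      intro p
      have := hK1 p; have := hK2 p
      rw [hsigval]
      omega
    have hV : ∀ p y : Fin n, (v : Matrix (Fin n) (Fin n) F) p y
        = if y = sig p then a (K p) else 0 := by
      intro p y
      rw [hVform, mul_blockAnti_entry c a hcsum p y (K p) (hK1 p) (hK2 p)]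
      have h1 := hK1 p; have h2 := hK2 p; have h3 := hbnd p
      have hyy := y.isLt
      by_cases hy : y = sig p
      · rw [if_pos hy, if_pos]
        rw [hy, hsigval]
        omega
      · rw [if_neg hy, if_neg]
        intro hc
        exact hy (Fin.ext (by rw [hsigval]; omega))
    have hsiginj : Function.Injective sig := by
      intro p p' hpp
      have h1 := hK1 p; have h2 := hK2 p
      have h1' := hK1 p'; have h2' := hK2 p'
      have hval : (sig p : ℕ) = (sig p' : ℕ) := congrArg Fin.val hpp
      have hkk : K p = K p' :=
        block_disjoint c (hsiglo p) (hsighi p)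
          (hval ▸ hsiglo p') (hval ▸ hsighi p')
      have hvv : (2 * blockOffset c (K p) + c (K p) - 1 - (n - 1 - (p : ℕ)) : ℕ)
          = 2 * blockOffset c (K p') + c (K p') - 1 - (n - 1 - ((p' : Fin n) : ℕ)) := by
        rw [← hsigval p, ← hsigval p', hval]
      rw [← hkk] at hvv h1' h2'
      have hp := p.isLt; have hp' := p'.isLt
      exact Fin.ext (by omega)
    set e : Equiv.Perm (Fin n) :=
      Equiv.ofBijective sig (Finite.injective_iff_bijective.mp hsiginj) with he
    have heapp : ∀ p, e p = sig p := fun p => rfl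
    apply memNmu_of ψ v e (fun p => a (K p)) (fun p => ha (K p))
      (fun i j => by rw [heapp]; exact hV i j)
    · -- S2
      intro p hp
      set p1 : Fin n := ⟨(p : ℕ) + 1, hp⟩ with hp1
      have hx : (n - 1 - ((p1 : Fin n) : ℕ) : ℕ) = n - 1 - (p : ℕ) - 1 := by
        show (n - 1 - ((p : ℕ) + 1) : ℕ) = n - 1 - (p : ℕ) - 1
        omega
      have h1 := hK1 p; have h2 := hK2 p
      have h1' := hK1 p1; have h2' := hK2 p1
      rw [hx] at h1' h2'
      rw [heapp, heapp, hsigval, hsigval]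
      by_cases hsame : blockOffset c (K p) ≤ n - 1 - (p : ℕ) - 1
      · left
        have hkk : K p1 = K p := by
          apply block_disjoint c h1' h2' hsame
          omega
        rw [hkk]
        constructor
        · omega
        · rfl
      · right
        -- K p1 is a strictly earlier block
        have hxp : n - 1 - (p : ℕ) = blockOffset c (K p) := by omega
        have hlt : K p1 < K p := by
          rcases lt_trichotomy (K p1) (K p) with h | h | h
          · exact h
          · exfalso; rw [h] at h1'; omega
          · exfalso
            have := blockOffset_le_of_lt c h
            omega
        have := blockOffset_le_of_lt c hlt
        omega
    · -- S3
      intro p q hpq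
      rw [heapp, heapp] at hpq
      have h1 := hK1 p; have h2 := hK2 p
      have h1' := hK1 q; have h2' := hK2 q
      have hsp := hsiglo p; have hsp' := hsighi p
      have hsq := hsiglo q; have hsq' := hsighi q
      have hp := p.isLt; have hq := q.isLt
      by_cases hin : (sig p : ℕ) + 1 < blockOffset c (K p) + c (K p)
      · left
        have hkk : K q = K p := by
          apply block_disjoint c hsq hsq'
          · omega
          · omega
        rw [hsigval, hsigval, hkk] at hpq
        omega
      · right
        -- sig q = blockOffset (K p) + c (K p), so K q is a strictly later block
        have hgt : K p < K q := by
          rcases lt_trichotomy (K p) (K q) with h | h | h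
          · exact h
          · exfalso; rw [← h] at hsq hsq'; omega
          · exfalso
            have := blockOffset_le_of_lt c h
            omega
        have hoff := blockOffset_le_of_lt c hgt
        rw [hsigval, hsigval] at hpq
        omega
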